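/- arXiv:2510.07439 — 6 statements merged into one kernel-verified Lean document; each statement's English description precedes it below -/
import Mathlib

section
/- Let L, M, R be positive integers, Φ ∈ ℂ^{L×M}, Ψ ∈ ℂ^{R×M}, λ_1,…,λ_M ∈ ℝ, and T ≥ 0. Define G(θ) = Φ · diag(exp(−(θ−λ_m)²T²))_{m∈[M]} · Ψᴴ ∈ ℂ^{L×R}. Then for all θ, θ' ∈ ℝ: ‖G(θ) − G(θ')‖_F ≤ T·|θ − θ'| · Σ_{m∈[M]} ‖Φ_{:,m}‖ · ‖Ψ_{:,m}‖. -/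
open Matrix

/-- Frobenius norm of a complex matrix. -/
noncomputable def frob {m n : Type*} [Fintype m] [Fintype n] (A : Matrix m n ℂ) : ℝ :=
  Real.sqrt (∑ i, ∑ j, ‖A i j‖ ^ 2)

/-- Euclidean norm of the `m`-th column of a matrix. -/
noncomputable def colNorm {l m : Type*} [Fintype l] (A : Matrix l m ℂ) (j : m) : ℝ :=
  Real.sqrt (∑ i, ‖A i j‖ ^ 2)

/-!
Writing `g_m(θ) = exp (-(θ - λ_m)² T²)`, the difference `G(θ) - G(θ')` is the sum over `m` of
the rank-one matrices `(g_m(θ) - g_m(θ')) Φ_{:,m} Ψ_{:,m}ᴴ`, whose Frobenius norms are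
`|g_m(θ) - g_m(θ')| ‖Φ_{:,m}‖ ‖Ψ_{:,m}‖`. The Gaussian `t ↦ exp (-t²)` is `1`-Lipschitz, because
`2|t| ≤ 1 + t² ≤ exp (t²)`; rescaling by `T` gives `|g_m(θ) - g_m(θ')| ≤ T |θ - θ'|`.
-/

open WithLp

attribute [local instance] Matrix.frobeniusSeminormedAddCommGroup Matrix.frobeniusNormedSpace

namespace Matrix

variable {l m n α : Type*} [Fintype m]

theorem mul_diagonal_mul_eq_sum_vecMulVec [CommSemiring α] [DecidableEq m]
    (A : Matrix l m α) (d : m → α) (B : Matrix m n α) :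
    A * diagonal d * B = ∑ k, d k • vecMulVec (fun i => A i k) (B k) := by
  ext i j
  rw [mul_apply]
  simp only [mul_diagonal, sum_apply, smul_apply, vecMulVec_apply, smul_eq_mul]
  exact Finset.sum_congr rfl fun k _ => by ring

variable [Fintype l] [Fintype n]

theorem frobenius_norm_vecMulVec [SeminormedRing α] [NormMulClass α] (u : m → α) (v : n → α) :
    ‖vecMulVec u v‖ = ‖toLp 2 u‖ * ‖toLp 2 v‖ := by
  simp only [frobenius_norm_def, PiLp.norm_eq_of_L2, vecMulVec_apply, norm_mul]
  rw [← Real.sqrt_mul (by positivity), Finset.sum_mul_sum, Real.sqrt_eq_rpow]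
  simp [mul_pow]

theorem frobenius_norm_mul_diagonal_mul_le [RCLike α] [DecidableEq m]
    (A : Matrix l m α) (d : m → α) (B : Matrix m n α) :
    ‖A * diagonal d * B‖ ≤ ∑ k, ‖d k‖ * (‖toLp 2 (fun i => A i k)‖ * ‖toLp 2 (B k)‖) := by
  rw [mul_diagonal_mul_eq_sum_vecMulVec]
  refine (norm_sum_le _ _).trans_eq (Finset.sum_congr rfl fun k _ => ?_)
  rw [norm_smul, frobenius_norm_vecMulVec]

end Matrix

theorem colNorm_eq_norm_toLp {l m : Type*} [Fintype l] (A : Matrix l m ℂ) (j : m) :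
    colNorm A j = ‖toLp 2 (fun i => A i j)‖ := by
  simp [colNorm, PiLp.norm_eq_of_L2]

theorem colNorm_eq_norm_toLp_conjTranspose {l m : Type*} [Fintype l] (A : Matrix l m ℂ) (j : m) :
    colNorm A j = ‖toLp 2 (Aᴴ j)‖ := by
  simp [colNorm, PiLp.norm_eq_of_L2]

theorem frob_eq_frobenius_norm {m n : Type*} [Fintype m] [Fintype n] (A : Matrix m n ℂ) :
    frob A = ‖A‖ := by
  simp [frob, frobenius_norm_def, Real.sqrt_eq_rpow]

theorem abs_two_mul_mul_exp_neg_sq_le_one (x : ℝ) : |2 * x * Real.exp (-x ^ 2)| ≤ 1 := by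
  have h2x : 2 * |x| ≤ x ^ 2 + 1 := by nlinarith [sq_nonneg (|x| - 1), sq_abs x]
  rw [abs_mul, abs_mul, abs_two, Real.abs_exp, Real.exp_neg, ← div_eq_mul_inv,
    div_le_one (Real.exp_pos _)]
  exact h2x.trans (Real.add_one_le_exp _)

theorem lipschitzWith_one_exp_neg_sq : LipschitzWith 1 fun x : ℝ => Real.exp (-x ^ 2) := by
  have hderiv (x : ℝ) :
      HasDerivAt (fun x : ℝ => Real.exp (-x ^ 2)) (-(2 * x * Real.exp (-x ^ 2))) x := by
    simpa [mul_comm] using ((hasDerivAt_pow 2 x).neg).exp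
  refine lipschitzWith_of_nnnorm_deriv_le (fun x => (hderiv x).differentiableAt) fun x => ?_
  rw [(hderiv x).deriv, ← NNReal.coe_le_coe, coe_nnnorm, norm_neg, Real.norm_eq_abs]
  exact abs_two_mul_mul_exp_neg_sq_le_one x

theorem abs_exp_neg_sq_mul_sq_sub_le {T : ℝ} (hT : 0 ≤ T) (x y : ℝ) :
    |Real.exp (-x ^ 2 * T ^ 2) - Real.exp (-y ^ 2 * T ^ 2)| ≤ T * |x - y| := by
  have h := lipschitzWith_one_exp_neg_sq.dist_le_mul (x * T) (y * T)
  rw [Real.dist_eq, Real.dist_eq, NNReal.coe_one, one_mul, ← sub_mul, abs_mul, abs_of_nonneg hT]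
    at h
  rw [mul_comm T]
  convert h using 4 <;> ring

theorem stmt1_general (L M R : ℕ)
    (Φ : Matrix (Fin L) (Fin M) ℂ) (Ψ : Matrix (Fin R) (Fin M) ℂ)
    (lam : Fin M → ℝ) (T : ℝ) (hT : 0 ≤ T) :
    ∀ θ θ' : ℝ,
      frob (Φ * Matrix.diagonal (fun m => (Real.exp (-(θ - lam m) ^ 2 * T ^ 2) : ℂ)) * Ψᴴ -
            Φ * Matrix.diagonal (fun m => (Real.exp (-(θ' - lam m) ^ 2 * T ^ 2) : ℂ)) * Ψᴴ) ≤
        T * |θ - θ'| * ∑ m, colNorm Φ m * colNorm Ψ m := by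
  intro θ θ'
  rw [frob_eq_frobenius_norm, ← Matrix.sub_mul, ← Matrix.mul_sub, diagonal_sub, Finset.mul_sum]
  refine (frobenius_norm_mul_diagonal_mul_le _ _ _).trans (Finset.sum_le_sum fun m _ => ?_)
  rw [← colNorm_eq_norm_toLp, ← colNorm_eq_norm_toLp_conjTranspose]
  gcongr
  · exact mul_nonneg (Real.sqrt_nonneg _) (Real.sqrt_nonneg _)
  · rw [← Complex.ofReal_sub, Complex.norm_real, Real.norm_eq_abs]
    simpa only [sub_sub_sub_cancel_right] using
      abs_exp_neg_sq_mul_sq_sub_le hT (θ - lam m) (θ' - lam m)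

/-- Lipschitz bound in `θ` for the Gaussian-filtered overlap matrix:
`‖G(θ) − G(θ')‖_F ≤ T·|θ − θ'| · Σ_m ‖Φ_{:,m}‖·‖Ψ_{:,m}‖`. -/
theorem stmt1 (L M R : ℕ) (hL : 0 < L) (hM : 0 < M) (hR : 0 < R)
    (Φ : Matrix (Fin L) (Fin M) ℂ) (Ψ : Matrix (Fin R) (Fin M) ℂ)
    (lam : Fin M → ℝ) (T : ℝ) (hT : 0 ≤ T) :
    ∀ θ θ' : ℝ,
      frob (Φ * Matrix.diagonal (fun m => (Real.exp (-(θ - lam m) ^ 2 * T ^ 2) : ℂ)) * Ψᴴ -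
            Φ * Matrix.diagonal (fun m => (Real.exp (-(θ' - lam m) ^ 2 * T ^ 2) : ℂ)) * Ψᴴ) ≤
        T * |θ - θ'| * ∑ m, colNorm Φ m * colNorm Ψ m :=
  stmt1_general L M R Φ Ψ lam T hT
end

section
/- Let L, R, k be positive integers, χ > 0, Φ ∈ ℂ^{L×k} and Ψ ∈ ℂ^{R×k}. Assume the uniform overlap condition for Φ: the smallest singular value of Φ satisfies s_min(Φ) ≥ ‖Φ‖_F / ((1+χ)·√k). Then ‖Φ·Ψᴴ‖_F ≥ (1/(1+χ)) · min_{m∈[k]} ‖Φ_{:,m}‖ · ‖Ψ_{:,m}‖. -/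
/-!
Column `j` of `Φ Ψᴴ` is `Φ x` with `x` the conjugated `j`-th row of `Ψ`, and `ΦᴴΦ - s_min(Φ)² I` is
positive semidefinite, so `‖Φ x‖ ≥ s_min(Φ) ‖x‖`; summing squares over `j`, `‖Φ Ψᴴ‖_F ≥ s_min(Φ) ‖Ψ‖_F`,
which the overlap condition bounds below by `‖Φ‖_F ‖Ψ‖_F / ((1+χ)√k)`. By Cauchy–Schwarz,
`√k · min_m ‖Φ_{:,m}‖ ‖Ψ_{:,m}‖ ≤ k · min_m ‖Φ_{:,m}‖ ‖Ψ_{:,m}‖ ≤ Σ_m ‖Φ_{:,m}‖ ‖Ψ_{:,m}‖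
≤ ‖Φ‖_F ‖Ψ‖_F`.
-/

open Matrix

/-- Smallest singular value of a matrix `A`, i.e. the square root of the smallest
eigenvalue of the Hermitian PSD matrix `AᴴA`. -/
noncomputable def smin {l : Type*} [Fintype l] {n : ℕ} (hn : 0 < n)
    (A : Matrix l (Fin n) ℂ) : ℝ :=
  Real.sqrt (Finset.univ.inf' (Finset.univ_nonempty_iff.mpr ⟨⟨0, hn⟩⟩)
    (Matrix.isHermitian_conjTranspose_mul_self A).eigenvalues)

open scoped ComplexOrder

namespace Matrix

variable {𝕜 n : Type*} [RCLike 𝕜] [Fintype n]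

lemma re_star_dotProduct_self (v : n → 𝕜) : RCLike.re (star v ⬝ᵥ v) = ∑ i, ‖v i‖ ^ 2 := by
  simp only [dotProduct, map_sum, Pi.star_apply, RCLike.star_def, RCLike.conj_mul]
  simp only [← RCLike.ofReal_pow, RCLike.ofReal_re]

lemma IsHermitian.posSemidef_sub_smul_one [DecidableEq n] {A : Matrix n n 𝕜} (hA : A.IsHermitian)
    {c : ℝ} (hc : ∀ i, c ≤ hA.eigenvalues i) : (A - (c : 𝕜) • 1).PosSemidef := by
  set U : Matrix n n 𝕜 := (hA.eigenvectorUnitary : Matrix n n 𝕜)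
  have hU : U * star U = 1 := Unitary.mul_star_self_of_mem hA.eigenvectorUnitary.2
  have hconj : A - (c : 𝕜) • 1 =
      U * (diagonal (RCLike.ofReal ∘ hA.eigenvalues) - (c : 𝕜) • 1) * star U := by
    conv_lhs => rw [hA.spectral_theorem, Unitary.conjStarAlgAut_apply]
    rw [Matrix.mul_sub, Matrix.sub_mul, Matrix.mul_smul, Matrix.smul_mul, mul_one, hU]
  rw [hconj, Unitary.isUnit_coe.posSemidef_star_right_conjugate_iff, smul_one_eq_diagonal,
    diagonal_sub, posSemidef_diagonal_iff]
  intro i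
  simpa [sub_nonneg] using hc i

lemma IsHermitian.mul_sum_norm_sq_le_re_dotProduct_mulVec [DecidableEq n] {A : Matrix n n 𝕜}
    (hA : A.IsHermitian) {c : ℝ} (hc : ∀ i, c ≤ hA.eigenvalues i) (x : n → 𝕜) :
    c * ∑ i, ‖x i‖ ^ 2 ≤ RCLike.re (star x ⬝ᵥ A *ᵥ x) := by
  have := (hA.posSemidef_sub_smul_one hc).re_dotProduct_nonneg x
  rwa [sub_mulVec, dotProduct_sub, smul_mulVec, one_mulVec, dotProduct_smul, map_sub,
    smul_eq_mul, RCLike.re_ofReal_mul, re_star_dotProduct_self, sub_nonneg] at this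

end Matrix

lemma sq_smin_mul_sum_norm_sq_le_mulVec {l : Type*} [Fintype l] {n : ℕ} (hn : 0 < n)
    (A : Matrix l (Fin n) ℂ) (x : Fin n → ℂ) :
    smin hn A ^ 2 * ∑ i, ‖x i‖ ^ 2 ≤ ∑ i, ‖(A *ᵥ x) i‖ ^ 2 := by
  have hAA := isHermitian_conjTranspose_mul_self A
  have hmin : ∀ i, Finset.univ.inf' (Finset.univ_nonempty_iff.mpr ⟨⟨0, hn⟩⟩) hAA.eigenvalues ≤
      hAA.eigenvalues i := fun i => Finset.inf'_le _ (Finset.mem_univ i)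
  rw [smin, Real.sq_sqrt
    (Finset.le_inf' _ _ fun i _ => eigenvalues_conjTranspose_mul_self_nonneg A i)]
  have := hAA.mul_sum_norm_sq_le_re_dotProduct_mulVec hmin x
  rwa [← mulVec_mulVec, dotProduct_mulVec, ← star_mulVec, re_star_dotProduct_self] at this

lemma frob_sq {m n : Type*} [Fintype m] [Fintype n] (A : Matrix m n ℂ) :
    frob A ^ 2 = ∑ i, ∑ j, ‖A i j‖ ^ 2 :=
  Real.sq_sqrt (by positivity)

lemma smin_mul_frob_le_frob_mul_conjTranspose {l r : Type*} [Fintype l] [Fintype r] {n : ℕ}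
    (hn : 0 < n) (A : Matrix l (Fin n) ℂ) (B : Matrix r (Fin n) ℂ) :
    smin hn A * frob B ≤ frob (A * Bᴴ) := by
  have hcol (j : r) : smin hn A ^ 2 * ∑ m, ‖B j m‖ ^ 2 ≤ ∑ i, ‖(A * Bᴴ) i j‖ ^ 2 := by
    have h := sq_smin_mul_sum_norm_sq_le_mulVec hn A (star (B j))
    simp only [Pi.star_apply, norm_star] at h
    exact h
  refine Real.le_sqrt_of_sq_le ?_
  rw [mul_pow, frob_sq, Finset.mul_sum, Finset.sum_comm (γ := l)]
  exact Finset.sum_le_sum fun j _ => hcol j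

lemma sum_colNorm_mul_le_frob_mul_frob {l r n : Type*} [Fintype l] [Fintype r] [Fintype n]
    (A : Matrix l n ℂ) (B : Matrix r n ℂ) :
    ∑ j, colNorm A j * colNorm B j ≤ frob A * frob B := by
  rw [frob, frob, Finset.sum_comm (γ := l), Finset.sum_comm (γ := r)]
  exact Real.sum_sqrt_mul_sqrt_le _ (fun _ => by positivity) fun _ => by positivity

lemma card_mul_inf'_colNorm_mul_le_frob_mul_frob {l r n : Type*} [Fintype l] [Fintype r]
    [Fintype n] (A : Matrix l n ℂ) (B : Matrix r n ℂ) (hn : (Finset.univ : Finset n).Nonempty) :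
    Fintype.card n * Finset.univ.inf' hn (fun j => colNorm A j * colNorm B j) ≤
      frob A * frob B := by
  refine le_trans ?_ (sum_colNorm_mul_le_frob_mul_frob A B)
  simpa using Finset.card_nsmul_le_sum Finset.univ (fun j => colNorm A j * colNorm B j) _
    fun j _ => Finset.inf'_le _ (Finset.mem_univ j)

theorem stmt4_general (L R k : ℕ) (hk : 0 < k) (χ : ℝ) (hχ : 0 < χ)
    (Φ : Matrix (Fin L) (Fin k) ℂ) (Ψ : Matrix (Fin R) (Fin k) ℂ)
    (hover : frob Φ / ((1 + χ) * Real.sqrt k) ≤ smin hk Φ) :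
    (1 / (1 + χ)) *
        Finset.univ.inf' (Finset.univ_nonempty_iff.mpr ⟨⟨0, hk⟩⟩)
          (fun m => colNorm Φ m * colNorm Ψ m) ≤
      frob (Φ * Ψᴴ) := by
  set I := Finset.univ.inf' (Finset.univ_nonempty_iff.mpr ⟨⟨0, hk⟩⟩)
    (fun m => colNorm Φ m * colNorm Ψ m)
  have hI : 0 ≤ I := Finset.le_inf' _ _ fun m _ => by unfold colNorm; positivity
  have hsqrt : Real.sqrt k * I ≤ frob Φ * frob Ψ := calc
    Real.sqrt k * I ≤ k * I := by
      gcongr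
      exact (Real.sqrt_le_left (by positivity)).mpr
        (le_self_pow₀ (by exact_mod_cast hk) two_ne_zero)
    _ ≤ frob Φ * frob Ψ := by
      simpa using card_mul_inf'_colNorm_mul_le_frob_mul_frob Φ Ψ _
  calc 1 / (1 + χ) * I ≤ frob Φ / ((1 + χ) * Real.sqrt k) * frob Ψ := by
        rw [div_mul_eq_mul_div (frob Φ), le_div_iff₀ (by positivity)]
        calc _ = Real.sqrt k * I := by field_simp
          _ ≤ _ := hsqrt
    _ ≤ smin hk Φ * frob Ψ := by gcongr; unfold frob; positivity
    _ ≤ frob (Φ * Ψᴴ) := smin_mul_frob_le_frob_mul_conjTranspose hk Φ Ψ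

/-- under the uniform overlap condition for `Φ`,
`‖Φ·Ψᴴ‖_F ≥ (1/(1+χ)) · min_m ‖Φ_{:,m}‖·‖Ψ_{:,m}‖`. -/
theorem stmt4 (L R k : ℕ) (hL : 0 < L) (hR : 0 < R) (hk : 0 < k) (χ : ℝ) (hχ : 0 < χ)
    (Φ : Matrix (Fin L) (Fin k) ℂ) (Ψ : Matrix (Fin R) (Fin k) ℂ)
    (hover : frob Φ / ((1 + χ) * Real.sqrt k) ≤ smin hk Φ) :
    (1 / (1 + χ)) *
        Finset.univ.inf' (Finset.univ_nonempty_iff.mpr ⟨⟨0, hk⟩⟩)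
          (fun m => colNorm Φ m * colNorm Ψ m) ≤
      frob (Φ * Ψᴴ) :=
  stmt4_general L R k hk χ hχ Φ Ψ hover
end

section
/- Let R, k be positive integers, M ∈ ℂ^{k×k} a Hermitian positive semidefinite matrix, and Ψ ∈ ℂ^{R×k}. Then for every index j, the j-th largest eigenvalue of the Hermitian positive semidefinite matrix Ψ·M·Ψᴴ is at least λ_min(M) times the j-th largest eigenvalue of Ψ·Ψᴴ, where λ_min(M) is the smallest eigenvalue of M. -/
/-!
Conjugation by `Ψ` turns the quadratic form of `Ψ M Ψᴴ` at `x` into that of `M` at `y = Ψᴴ x`,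
and that of `Ψ Ψᴴ` into `‖y‖²`; expanding `y` in an eigenbasis of `M` gives
`λ_min(M) · xᴴ Ψ Ψᴴ x ≤ xᴴ Ψ M Ψᴴ x` for all `x`. By the Courant–Fischer argument such a
comparison of quadratic forms passes to every ordered eigenvalue: the span of the top `j + 1`
eigenvectors of one matrix meets the span of the bottom `n - j` eigenvectors of the other
nontrivially, and a common nonzero vector compares the two `j`-th largest eigenvalues.
-/

open Matrix
open scoped ComplexOrder

/-- The `j`-th largest value of the tuple `f` (with `j = 0` giving the largest). -/
noncomputable def nthLargest {n : ℕ} (f : Fin n → ℝ) (j : Fin n) : ℝ :=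
  (f ∘ Tuple.sort f) j.rev

open scoped InnerProductSpace
open Module Submodule

theorem Submodule.exists_ne_zero_mem_inf_of_finrank_lt {K V : Type*} [DivisionRing K]
    [AddCommGroup V] [Module K V] [FiniteDimensional K V] (S T : Submodule K V)
    (h : finrank K V < finrank K S + finrank K T) : ∃ x ∈ S ⊓ T, x ≠ 0 := by
  refine exists_mem_ne_zero_of_ne_bot fun hbot => h.not_ge ?_
  calc finrank K S + finrank K T = finrank K ↥(S ⊔ T) := by
        rw [← finrank_sup_add_finrank_inf_eq, hbot, finrank_bot, add_zero]
    _ ≤ finrank K V := finrank_le _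

theorem LinearIndependent.finrank_span_image_finset {R M ι : Type*} [Ring R] [Nontrivial R]
    [StrongRankCondition R] [AddCommGroup M] [Module R M] {v : ι → M}
    (hv : LinearIndependent R v) (s : Finset ι) : finrank R (span R (v '' s)) = s.card := by
  rw [Set.image_eq_range]
  exact (finrank_span_eq_card (hv.comp _ Subtype.val_injective)).trans (Fintype.card_coe s)

theorem OrthonormalBasis.inner_eq_zero_of_mem_span_image {ι 𝕜 E : Type*} [RCLike 𝕜]
    [NormedAddCommGroup E] [InnerProductSpace 𝕜 E] [Fintype ι] (b : OrthonormalBasis ι 𝕜 E)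
    {s : Set ι} {x : E} (hx : x ∈ span 𝕜 (b '' s)) {i : ι} (hi : i ∉ s) : ⟪b i, x⟫_𝕜 = 0 := by
  rw [← b.coe_toBasis] at hx
  rw [← b.repr_apply_apply, ← b.coe_toBasis_repr_apply]
  exact Finsupp.notMem_support_iff.mp fun h => hi (b.toBasis.mem_span_image.mp hx h)

theorem Matrix.star_dotProduct_mul_mul_conjTranspose_mulVec {m n R : Type*} [Fintype m]
    [Fintype n] [CommSemiring R] [StarRing R] (A : Matrix n n R) (B : Matrix m n R) (x : m → R) :
    star x ⬝ᵥ (B * A * Bᴴ) *ᵥ x = star (Bᴴ *ᵥ x) ⬝ᵥ A *ᵥ (Bᴴ *ᵥ x) := by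
  rw [star_mulVec, conjTranspose_conjTranspose, ← mulVec_mulVec, ← mulVec_mulVec,
    dotProduct_mulVec, dotProduct_mulVec, dotProduct_mulVec, vecMul_vecMul]

namespace Matrix.IsHermitian

variable {𝕜 : Type*} [RCLike 𝕜]

section Rayleigh

variable {n : Type*} [Fintype n] [DecidableEq n] {A : Matrix n n 𝕜}

lemma inner_eigenvectorBasis_mulVec (hA : A.IsHermitian) (x : EuclideanSpace 𝕜 n) (i : n) :
    ⟪hA.eigenvectorBasis i, WithLp.toLp 2 (A *ᵥ x)⟫_𝕜 =
      hA.eigenvalues i * ⟪hA.eigenvectorBasis i, x⟫_𝕜 := by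
  have := isSymmetric_toEuclideanLin_iff.mpr hA (hA.eigenvectorBasis i) x
  rw [toLpLin_apply, toLpLin_apply] at this
  rw [← this, hA.mulVec_eigenvectorBasis, WithLp.toLp_smul, WithLp.toLp_ofLp,
    RCLike.real_smul_eq_coe_smul (K := 𝕜), inner_smul_real_left, RCLike.real_smul_eq_coe_mul]

lemma re_dotProduct_mulVec_eq_sum (hA : A.IsHermitian) (x : EuclideanSpace 𝕜 n) :
    RCLike.re (star ⇑x ⬝ᵥ A *ᵥ ⇑x) =
      ∑ i, hA.eigenvalues i * ‖⟪hA.eigenvectorBasis i, x⟫_𝕜‖ ^ 2 := by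
  rw [dotProduct_comm, ← EuclideanSpace.inner_eq_star_dotProduct,
    ← hA.eigenvectorBasis.sum_inner_mul_inner, map_sum]
  refine Finset.sum_congr rfl fun i _ => ?_
  rw [inner_eigenvectorBasis_mulVec, mul_left_comm, RCLike.re_ofReal_mul,
    inner_mul_symm_re_eq_norm, norm_mul, norm_inner_symm, sq]

lemma mul_norm_sq_le_re_dotProduct (hA : A.IsHermitian) {s : Set n} {c : ℝ}
    (hc : ∀ i ∈ s, c ≤ hA.eigenvalues i) {x : EuclideanSpace 𝕜 n}
    (hx : ∀ i ∉ s, ⟪hA.eigenvectorBasis i, x⟫_𝕜 = 0) :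
    c * ‖x‖ ^ 2 ≤ RCLike.re (star ⇑x ⬝ᵥ A *ᵥ ⇑x) := by
  rw [hA.re_dotProduct_mulVec_eq_sum, ← hA.eigenvectorBasis.sum_sq_norm_inner_right,
    Finset.mul_sum]
  refine Finset.sum_le_sum fun i _ => ?_
  by_cases hi : i ∈ s
  · exact mul_le_mul_of_nonneg_right (hc i hi) (sq_nonneg _)
  · simp [hx i hi]

lemma re_dotProduct_le_mul_norm_sq (hA : A.IsHermitian) {s : Set n} {c : ℝ}
    (hc : ∀ i ∈ s, hA.eigenvalues i ≤ c) {x : EuclideanSpace 𝕜 n}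
    (hx : ∀ i ∉ s, ⟪hA.eigenvectorBasis i, x⟫_𝕜 = 0) :
    RCLike.re (star ⇑x ⬝ᵥ A *ᵥ ⇑x) ≤ c * ‖x‖ ^ 2 := by
  rw [hA.re_dotProduct_mulVec_eq_sum, ← hA.eigenvectorBasis.sum_sq_norm_inner_right,
    Finset.mul_sum]
  refine Finset.sum_le_sum fun i _ => ?_
  by_cases hi : i ∈ s
  · exact mul_le_mul_of_nonneg_right (hc i hi) (sq_nonneg _)
  · simp [hx i hi]

end Rayleigh

variable {n : ℕ} {A B : Matrix (Fin n) (Fin n) 𝕜}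

lemma exists_finrank_eq_forall_nthLargest_mul_le (hA : A.IsHermitian) (j : Fin n) :
    ∃ V : Submodule 𝕜 (EuclideanSpace 𝕜 (Fin n)), finrank 𝕜 V = j + 1 ∧
      ∀ x ∈ V, nthLargest hA.eigenvalues j * ‖x‖ ^ 2 ≤ RCLike.re (star ⇑x ⬝ᵥ A *ᵥ ⇑x) := by
  -- `σ` sorts the eigenvalues increasingly, so positions `j.rev, …, n - 1` hold the `j + 1`
  -- largest ones, the smallest of which is `nthLargest hA.eigenvalues j`.
  set σ := Tuple.sort hA.eigenvalues
  let s := (Finset.Ici j.rev).map σ.toEmbedding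
  refine ⟨span 𝕜 (hA.eigenvectorBasis '' s), ?_, fun x hx => ?_⟩
  · rw [hA.eigenvectorBasis.orthonormal.linearIndependent.finrank_span_image_finset,
      Finset.card_map, Fin.card_Ici, Fin.val_rev]
    omega
  · refine hA.mul_norm_sq_le_re_dotProduct (s := s) ?_
      fun i hi => hA.eigenvectorBasis.inner_eq_zero_of_mem_span_image hx hi
    simp only [s, Finset.coe_map, Set.mem_image, Finset.mem_coe, Finset.mem_Ici]
    rintro _ ⟨k, hk, rfl⟩
    exact Tuple.monotone_sort hA.eigenvalues hk

lemma exists_finrank_eq_forall_le_nthLargest_mul (hA : A.IsHermitian) (j : Fin n) :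
    ∃ V : Submodule 𝕜 (EuclideanSpace 𝕜 (Fin n)), finrank 𝕜 V = n - j ∧
      ∀ x ∈ V, RCLike.re (star ⇑x ⬝ᵥ A *ᵥ ⇑x) ≤ nthLargest hA.eigenvalues j * ‖x‖ ^ 2 := by
  set σ := Tuple.sort hA.eigenvalues
  let s := (Finset.Iic j.rev).map σ.toEmbedding
  refine ⟨span 𝕜 (hA.eigenvectorBasis '' s), ?_, fun x hx => ?_⟩
  · rw [hA.eigenvectorBasis.orthonormal.linearIndependent.finrank_span_image_finset,
      Finset.card_map, Fin.card_Iic, Fin.val_rev]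
    omega
  · refine hA.re_dotProduct_le_mul_norm_sq (s := s) ?_
      fun i hi => hA.eigenvectorBasis.inner_eq_zero_of_mem_span_image hx hi
    simp only [s, Finset.coe_map, Set.mem_image, Finset.mem_coe, Finset.mem_Iic]
    rintro _ ⟨k, hk, rfl⟩
    exact Tuple.monotone_sort hA.eigenvalues hk

theorem mul_nthLargest_eigenvalues_le (hA : A.IsHermitian) (hB : B.IsHermitian) {c : ℝ}
    (hc : 0 ≤ c) (h : ∀ x, c * RCLike.re (star x ⬝ᵥ A *ᵥ x) ≤ RCLike.re (star x ⬝ᵥ B *ᵥ x))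
    (j : Fin n) : c * nthLargest hA.eigenvalues j ≤ nthLargest hB.eigenvalues j := by
  obtain ⟨V, hV, hAV⟩ := hA.exists_finrank_eq_forall_nthLargest_mul_le j
  obtain ⟨W, hW, hBW⟩ := hB.exists_finrank_eq_forall_le_nthLargest_mul j
  obtain ⟨x, ⟨hxV, hxW⟩, hx0⟩ := V.exists_ne_zero_mem_inf_of_finrank_lt W (by
    rw [finrank_euclideanSpace_fin, hV, hW]
    omega)
  refine le_of_mul_le_mul_right ?_ (by positivity : 0 < ‖x‖ ^ 2)
  calc c * nthLargest hA.eigenvalues j * ‖x‖ ^ 2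
      ≤ c * RCLike.re (star ⇑x ⬝ᵥ A *ᵥ ⇑x) := by
        rw [mul_assoc]
        exact mul_le_mul_of_nonneg_left (hAV x hxV) hc
    _ ≤ RCLike.re (star ⇑x ⬝ᵥ B *ᵥ ⇑x) := h x
    _ ≤ nthLargest hB.eigenvalues j * ‖x‖ ^ 2 := hBW x hxW

end Matrix.IsHermitian

theorem stmt5_general (R k : ℕ) (hk : 0 < k)
    (M : Matrix (Fin k) (Fin k) ℂ) (hM : M.PosSemidef)
    (Ψ : Matrix (Fin R) (Fin k) ℂ) :
    ∀ j : Fin R,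
      (Finset.univ.inf' (Finset.univ_nonempty_iff.mpr ⟨⟨0, hk⟩⟩) hM.1.eigenvalues) *
          nthLargest ((Matrix.isHermitian_mul_conjTranspose_self Ψ).eigenvalues) j ≤
        nthLargest
          ((Matrix.isHermitian_mul_mul_conjTranspose Ψ hM.1).eigenvalues) j := by
  set c := Finset.univ.inf' (Finset.univ_nonempty_iff.mpr ⟨⟨0, hk⟩⟩) hM.1.eigenvalues
  have hc : 0 ≤ c := Finset.le_inf' _ _ fun i _ => hM.eigenvalues_nonneg i
  refine (isHermitian_mul_conjTranspose_self Ψ).mul_nthLargest_eigenvalues_le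
    (isHermitian_mul_mul_conjTranspose Ψ hM.1) hc fun x => ?_
  have hΨΨ := star_dotProduct_mul_mul_conjTranspose_mulVec (1 : Matrix (Fin k) (Fin k) ℂ) Ψ x
  rw [Matrix.mul_one, one_mulVec] at hΨΨ
  rw [hΨΨ, star_dotProduct_mul_mul_conjTranspose_mulVec]
  set y : EuclideanSpace ℂ (Fin k) := WithLp.toLp 2 (Ψᴴ *ᵥ x)
  have hy : RCLike.re (star ⇑y ⬝ᵥ ⇑y) = ‖y‖ ^ 2 := by
    rw [dotProduct_comm, ← EuclideanSpace.inner_eq_star_dotProduct, inner_self_eq_norm_sq]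
  rw [hy]
  exact hM.1.mul_norm_sq_le_re_dotProduct (s := Set.univ)
    (fun i _ => Finset.inf'_le _ (Finset.mem_univ i)) fun i hi => absurd (Set.mem_univ i) hi

/-- for Hermitian PSD `M` and any `Ψ`, the `j`-th largest eigenvalue of
`Ψ·M·Ψᴴ` is at least `λ_min(M)` times the `j`-th largest eigenvalue of `Ψ·Ψᴴ`. -/
theorem stmt5 (R k : ℕ) (hR : 0 < R) (hk : 0 < k)
    (M : Matrix (Fin k) (Fin k) ℂ) (hM : M.PosSemidef)
    (Ψ : Matrix (Fin R) (Fin k) ℂ) :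
    ∀ j : Fin R,
      (Finset.univ.inf' (Finset.univ_nonempty_iff.mpr ⟨⟨0, hk⟩⟩) hM.1.eigenvalues) *
          nthLargest ((Matrix.isHermitian_mul_conjTranspose_self Ψ).eigenvalues) j ≤
        nthLargest
          ((Matrix.isHermitian_mul_mul_conjTranspose Ψ hM.1).eigenvalues) j :=
  stmt5_general R k hk M hM Ψ
end

section
/- Let K, L, R be positive integers, Φ ∈ ℂ^{L×K}, and Ψ ∈ ℂ^{R×K} with every row of Ψ of Euclidean norm at most 1. Suppose the rank of Φ equals k with k < K. Then there exist matrices Φ̃ ∈ ℂ^{L×(k+1)} and Ψ̃ ∈ ℂ^{R×(k+1)} such that: (i) the last column of Φ̃ is zero; (ii) every row of Ψ̃ has Euclidean norm exactly 1; (iii) for each l ∈ [L], the l-th row of Φ̃ has the same Euclidean norm as the l-th row of Φ; and (iv) Φ̃ · Ψ̃ᴴ = Φ · Ψᴴ. Consequently, for every real t and every λ⋆, λ' ∈ ℝ, e^{−iλ⋆t}·Φ̃_{:,[k]}·(Ψ̃_{:,[k]})ᴴ + e^{−iλ't}·Φ̃_{:,k}·(Ψ̃_{:,k})ᴴ = e^{−iλ⋆t}·Φ·Ψᴴ,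 so the measurement data generated by a Hamiltonian with a K-fold degenerate eigenvalue λ⋆ and overlap matrices Φ, Ψ is identical to that generated by a Hamiltonian with only a k-fold degenerate eigenvalue λ⋆ and an extra eigenvalue λ'. -/
/-!
Let the rows of `W` be an orthonormal basis of the row space of `Φ`, so that `W Wᴴ = 1` and
`Φ Wᴴ W = Φ`. Take `Φ̃ = [Φ Wᴴ | 0]` and `Ψ̃ = [Ψ Wᴴ | c]`; then `Φ̃ Ψ̃ᴴ = Φ Wᴴ W Ψᴴ = Φ Ψᴴ`.
As `Wᴴ W` is the orthogonal projection onto the row space, the rows of `Φ Wᴴ` keep the norms of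
the rows of `Φ`, while by Bessel's inequality the rows of `Ψ Wᴴ` have norm at most `1`. The last
column `c` pads them to unit vectors without changing the product, because it only meets the zero
column of `Φ̃`.
-/

open Matrix

namespace Matrix

variable {𝕜 m n : Type*} [RCLike 𝕜]

section Projection

variable [Fintype n]

theorem mul_conjTranspose_self_apply_self (A : Matrix m n 𝕜) (i : m) :
    (A * Aᴴ) i i = ((∑ j, ‖A i j‖ ^ 2 : ℝ) : 𝕜) := by
  simp [mul_apply, RCLike.mul_conj]

theorem rank_eq_finrank_span_toLp_row [Fintype m] (A : Matrix m n 𝕜) :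
    A.rank = Module.finrank 𝕜
      (Submodule.span 𝕜 (Set.range fun i => WithLp.toLp 2 (A i) : Set (EuclideanSpace 𝕜 n))) := by
  rw [rank_eq_finrank_span_row, ← LinearEquiv.finrank_map_eq (WithLp.linearEquiv 2 𝕜 (n → 𝕜)).symm,
    Submodule.map_span, ← Set.range_comp]
  rfl

theorem exists_orthonormal_rows_mul_conjTranspose_mul_eq [Fintype m] (A : Matrix m n 𝕜) {k : ℕ}
    (hk : A.rank = k) : ∃ W : Matrix (Fin k) n 𝕜, W * Wᴴ = 1 ∧ A * Wᴴ * W = A := by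
  set S := Submodule.span 𝕜 (Set.range fun i => WithLp.toLp 2 (A i) : Set (EuclideanSpace 𝕜 n))
  have hS : Module.finrank 𝕜 S = k := hk ▸ (rank_eq_finrank_span_toLp_row A).symm
  let b := (stdOrthonormalBasis 𝕜 S).reindex (finCongr hS)
  refine ⟨of fun j => (b j : EuclideanSpace 𝕜 n), ?_, ?_⟩
  · ext i j
    change inner 𝕜 (b j : EuclideanSpace 𝕜 n) (b i) = _
    rw [← Submodule.coe_inner, orthonormal_iff_ite.1 b.orthonormal, one_apply]
    exact if_congr eq_comm rfl rfl
  · ext i l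
    have hrow := congrArg (fun x : S => (x : EuclideanSpace 𝕜 n) l)
      (b.sum_repr' ⟨WithLp.toLp 2 (A i), Submodule.subset_span ⟨i, rfl⟩⟩)
    simp only [Submodule.coe_sum, Submodule.coe_smul, WithLp.ofLp_sum, WithLp.ofLp_smul,
      Finset.sum_apply, Pi.smul_apply, smul_eq_mul] at hrow
    rw [mul_apply, ← hrow]
    rfl

variable [DecidableEq n] {k : Type*} [Fintype k] [DecidableEq k] {W : Matrix k n 𝕜}

theorem sum_norm_sq_mul_conjTranspose_add_sum_norm_sq_sub (hW : W * Wᴴ = 1) (A : Matrix m n 𝕜)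
    (i : m) : ∑ j, ‖(A * Wᴴ) i j‖ ^ 2 + ∑ l, ‖(A - A * Wᴴ * W) i l‖ ^ 2 = ∑ l, ‖A i l‖ ^ 2 := by
  set Q := 1 - Wᴴ * W
  have hQ : Qᴴ = Q := by simp [Q]
  have hQQ : Q * Q = Q := by
    have : Wᴴ * W * (Wᴴ * W) = Wᴴ * W := by
      rw [Matrix.mul_assoc, ← Matrix.mul_assoc W, hW, Matrix.one_mul]
    simp only [Q, sub_mul, mul_sub, Matrix.one_mul, Matrix.mul_one, this, sub_self, sub_zero]
  have hgram : A * Wᴴ * (A * Wᴴ)ᴴ + A * Q * (A * Q)ᴴ = A * Aᴴ := calc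
    _ = A * (Wᴴ * W + Q * Q) * Aᴴ := by
      simp only [conjTranspose_mul, conjTranspose_conjTranspose, hQ, Matrix.mul_add,
        Matrix.add_mul, Matrix.mul_assoc]
    _ = A * Aᴴ := by rw [hQQ, add_sub_cancel, Matrix.mul_one]
  have hdiag := congrFun (congrFun hgram i) i
  rw [add_apply, mul_conjTranspose_self_apply_self, mul_conjTranspose_self_apply_self,
    mul_conjTranspose_self_apply_self] at hdiag
  rw [show A - A * Wᴴ * W = A * Q by rw [Matrix.mul_sub, Matrix.mul_one, Matrix.mul_assoc]]
  exact_mod_cast hdiag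

theorem sum_norm_sq_mul_conjTranspose_le (hW : W * Wᴴ = 1) (A : Matrix m n 𝕜) (i : m) :
    ∑ j, ‖(A * Wᴴ) i j‖ ^ 2 ≤ ∑ l, ‖A i l‖ ^ 2 :=
  (le_add_of_nonneg_right (by positivity)).trans
    (sum_norm_sq_mul_conjTranspose_add_sum_norm_sq_sub hW A i).le

theorem sum_norm_sq_mul_conjTranspose_of_mul_eq (hW : W * Wᴴ = 1) {A : Matrix m n 𝕜}
    (hA : A * Wᴴ * W = A) (i : m) : ∑ j, ‖(A * Wᴴ) i j‖ ^ 2 = ∑ l, ‖A i l‖ ^ 2 := by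
  simpa [hA] using sum_norm_sq_mul_conjTranspose_add_sum_norm_sq_sub hW A i

end Projection

section SnocCol

variable {α : Type*} {k : ℕ}

def snocCol (A : Matrix m (Fin k) α) (v : m → α) : Matrix m (Fin (k + 1)) α :=
  of fun i => Fin.snoc (A i) (v i)

@[simp]
theorem snocCol_apply_last (A : Matrix m (Fin k) α) (v : m → α) (i : m) :
    snocCol A v i (Fin.last k) = v i := by
  simp [snocCol]

@[simp]
theorem snocCol_apply_castSucc (A : Matrix m (Fin k) α) (v : m → α) (i : m)
    (j : Fin k) : snocCol A v i j.castSucc = A i j := by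
  simp [snocCol]

@[simp]
theorem submatrix_snocCol (A : Matrix m (Fin k) α) (v : m → α) :
    (snocCol A v).submatrix id Fin.castSucc = A := by
  ext; simp

theorem snocCol_mul_conjTranspose_snocCol {p : Type*} (A : Matrix m (Fin k) 𝕜) (v : m → 𝕜)
    (B : Matrix p (Fin k) 𝕜) (u : p → 𝕜) :
    snocCol A v * (snocCol B u)ᴴ = A * Bᴴ + vecMulVec v (star u) := by
  ext i j
  simp [mul_apply, Fin.sum_univ_castSucc, vecMulVec_apply]

theorem sum_norm_sq_snocCol (A : Matrix m (Fin k) 𝕜) (v : m → 𝕜) (i : m) :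
    ∑ j, ‖snocCol A v i j‖ ^ 2 = ∑ j, ‖A i j‖ ^ 2 + ‖v i‖ ^ 2 := by
  simp [Fin.sum_univ_castSucc]

noncomputable def snocUnitCol (B : Matrix m (Fin k) 𝕜) : Matrix m (Fin (k + 1)) 𝕜 :=
  snocCol B fun i => (√(1 - ∑ j, ‖B i j‖ ^ 2) : 𝕜)

theorem sum_norm_sq_snocUnitCol {B : Matrix m (Fin k) 𝕜} (hB : ∀ i, ∑ j, ‖B i j‖ ^ 2 ≤ 1)
    (i : m) : ∑ j, ‖snocUnitCol B i j‖ ^ 2 = 1 := by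
  rw [snocUnitCol, sum_norm_sq_snocCol, RCLike.norm_ofReal, sq_abs,
    Real.sq_sqrt (sub_nonneg.2 (hB i)), add_sub_cancel]

end SnocCol

end Matrix

theorem stmt7_general (K L R : ℕ)
    (k : ℕ)
    (Φ : Matrix (Fin L) (Fin K) ℂ) (Ψ : Matrix (Fin R) (Fin K) ℂ)
    (hΨrows : ∀ r, ∑ m, ‖Ψ r m‖ ^ 2 ≤ 1)
    (hrank : Φ.rank = k) :
    ∃ (Φt : Matrix (Fin L) (Fin (k + 1)) ℂ) (Ψt : Matrix (Fin R) (Fin (k + 1)) ℂ),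
      (∀ l, Φt l (Fin.last k) = 0) ∧
      (∀ r, ∑ j, ‖Ψt r j‖ ^ 2 = 1) ∧
      (∀ l, ∑ j, ‖Φt l j‖ ^ 2 = ∑ m, ‖Φ l m‖ ^ 2) ∧
      Φt * Ψtᴴ = Φ * Ψᴴ ∧
      ∀ (t lamStar lam' : ℝ),
        Complex.exp (-Complex.I * lamStar * t) •
            (Φt.submatrix id Fin.castSucc * (Ψt.submatrix id Fin.castSucc)ᴴ) +
          Complex.exp (-Complex.I * lam' * t) •
            Matrix.of (fun l r => Φt l (Fin.last k) * (starRingEnd ℂ) (Ψt r (Fin.last k))) =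
        Complex.exp (-Complex.I * lamStar * t) • (Φ * Ψᴴ) := by
  obtain ⟨W, hW, hΦW⟩ := Φ.exists_orthonormal_rows_mul_conjTranspose_mul_eq hrank
  have hcore : Φ * Wᴴ * (Ψ * Wᴴ)ᴴ = Φ * Ψᴴ := by
    rw [conjTranspose_mul, conjTranspose_conjTranspose, ← Matrix.mul_assoc, hΦW]
  have hprod : snocCol (Φ * Wᴴ) 0 * (snocUnitCol (Ψ * Wᴴ))ᴴ = Φ * Ψᴴ := by
    rw [snocUnitCol, snocCol_mul_conjTranspose_snocCol, zero_vecMulVec, add_zero, hcore]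
  refine ⟨snocCol (Φ * Wᴴ) 0, snocUnitCol (Ψ * Wᴴ), fun l => snocCol_apply_last _ _ l,
    sum_norm_sq_snocUnitCol fun r => (sum_norm_sq_mul_conjTranspose_le hW Ψ r).trans (hΨrows r),
    fun l => ?_, hprod, fun t lamStar lam' => ?_⟩
  · simp [sum_norm_sq_snocCol, sum_norm_sq_mul_conjTranspose_of_mul_eq hW hΦW]
  · rw [snocUnitCol, submatrix_snocCol, submatrix_snocCol, hcore]
    ext l r
    simp

/-- constructive core of the information-theoretic indistinguishability result.
If `rank Φ = k < K` and every row of `Ψ` has norm at most 1, there are matrices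
`Φ̃ ∈ ℂ^{L×(k+1)}`, `Ψ̃ ∈ ℂ^{R×(k+1)}` whose last `Φ̃`-column vanishes, whose `Ψ̃`-rows are
unit vectors, whose `Φ̃`-rows have the same norms as the rows of `Φ`, with
`Φ̃·Ψ̃ᴴ = Φ·Ψᴴ`, and which reproduce the Hadamard-test signal of a Hamiltonian with a
`k`-fold degenerate eigenvalue `λ⋆` plus one extra eigenvalue `λ'`. -/
theorem stmt7 (K L R : ℕ) (hK : 0 < K) (hL : 0 < L) (hR : 0 < R)
    (k : ℕ) (hk : k < K)
    (Φ : Matrix (Fin L) (Fin K) ℂ) (Ψ : Matrix (Fin R) (Fin K) ℂ)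
    (hΨrows : ∀ r, ∑ m, ‖Ψ r m‖ ^ 2 ≤ 1)
    (hrank : Φ.rank = k) :
    ∃ (Φt : Matrix (Fin L) (Fin (k + 1)) ℂ) (Ψt : Matrix (Fin R) (Fin (k + 1)) ℂ),
      (∀ l, Φt l (Fin.last k) = 0) ∧
      (∀ r, ∑ j, ‖Ψt r j‖ ^ 2 = 1) ∧
      (∀ l, ∑ j, ‖Φt l j‖ ^ 2 = ∑ m, ‖Φ l m‖ ^ 2) ∧
      Φt * Ψtᴴ = Φ * Ψᴴ ∧
      ∀ (t lamStar lam' : ℝ),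
        Complex.exp (-Complex.I * lamStar * t) •
            (Φt.submatrix id Fin.castSucc * (Ψt.submatrix id Fin.castSucc)ᴴ) +
          Complex.exp (-Complex.I * lam' * t) •
            Matrix.of (fun l r => Φt l (Fin.last k) * (starRingEnd ℂ) (Ψt r (Fin.last k))) =
        Complex.exp (-Complex.I * lamStar * t) • (Φ * Ψᴴ) :=
  stmt7_general K L R k Φ Ψ hΨrows hrank
end

section
/- Let T > 0 and σ > 0. Define a_T(t) = (1/(2T√π))·exp(−t²/(4T²)), let c = ∫_{−σT}^{σT} a_T(t) dt, and let μ be the probability measure on ℝ given by μ = (1−c)·δ₀ + a_T(t)·1_{[−σT,σT]}(t) dt, where δ₀ is the Dirac measure at 0. Then for every x ∈ ℝ: |∫_ℝ e^{ixt} dμ(t) − exp(−x²T²)| ≤ 2(1−c) ≤ 2·exp(−σ²/4). -/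
/-!
`a_T` is the density of the centred Gaussian `N(0, 2T²)` and `exp(-x²T²)` is its characteristic
function, while `μ` is that Gaussian with the mass outside `[-σT, σT]` moved to `0`. Moving mass
`1 - c` changes the integral of a function bounded by `1` by at most `2(1 - c)`.

For the tail, `t² ≥ s² + (t - s)²` when `0 ≤ s ≤ t`, so beyond `s` the density of `N(0, v)`
is at most `exp(-s²/2v)` times that of `N(s, v)`, whose mass beyond `s` is `1/2`. Doubling for
the left tail gives `1 - c ≤ exp(-σ²/4)`.
-/

open MeasureTheory ProbabilityTheory Set
open scoped NNReal

namespace MeasureTheory.Measure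

variable {α : Type*} [MeasurableSpace α]

noncomputable def truncate (ν : Measure α) (S : Set α) (a : α) : Measure α :=
  ν Sᶜ • dirac a + ν.restrict S

theorem norm_integral_truncate_sub_integral_le [MeasurableSingletonClass α] {E : Type*}
    [NormedAddCommGroup E] [NormedSpace ℝ E] [CompleteSpace E] (ν : Measure α)
    [IsFiniteMeasure ν] {S : Set α} (hS : MeasurableSet S) (a : α) {g : α → E}
    (hg : AEStronglyMeasurable g ν) (hg_le : ∀ x, ‖g x‖ ≤ 1) :
    ‖∫ x, g x ∂ν.truncate S a - ∫ x, g x ∂ν‖ ≤ 2 * ν.real Sᶜ := by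
  have hg_int : Integrable g ν := Integrable.of_bound hg 1 (ae_of_all _ hg_le)
  have hg_dirac : Integrable g (dirac a) := (integrable_const (g a)).congr (ae_eq_dirac g).symm
  rw [truncate, integral_add_measure (hg_dirac.smul_measure (measure_ne_top _ _))
    hg_int.restrict, integral_smul_measure, integral_dirac, ← integral_add_compl hS hg_int,
    add_comm (_ • _), add_sub_add_left_eq_sub, ← measureReal_def]
  calc ‖ν.real Sᶜ • g a - ∫ x in Sᶜ, g x ∂ν‖
      ≤ ‖ν.real Sᶜ • g a‖ + ‖∫ x in Sᶜ, g x ∂ν‖ := norm_sub_le _ _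
    _ ≤ ν.real Sᶜ * 1 + 1 * ν.real Sᶜ := by
      gcongr
      · rw [norm_smul, Real.norm_of_nonneg measureReal_nonneg]
        gcongr
        exact hg_le a
      · exact norm_setIntegral_le_of_norm_le_const (measure_lt_top _ _) fun x _ ↦ hg_le x
    _ = 2 * ν.real Sᶜ := by ring

end MeasureTheory.Measure

section GaussianTail

variable {v : ℝ≥0}

theorem gaussianPDFReal_le_exp_mul_gaussianPDFReal {s t : ℝ} (hs : 0 ≤ s) (hst : s ≤ t) :
    gaussianPDFReal 0 v t ≤ Real.exp (-s ^ 2 / (2 * v)) * gaussianPDFReal s v t := by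
  simp only [gaussianPDFReal, sub_zero]
  rw [mul_left_comm, ← Real.exp_add, ← add_div]
  gcongr
  nlinarith

theorem gaussianReal_zero_Iio_neg (s : ℝ) :
    gaussianReal 0 v (Iio (-s)) = gaussianReal 0 v (Ioi s) := by
  conv_lhs => rw [← neg_zero, ← gaussianReal_map_neg,
    Measure.map_apply measurable_neg measurableSet_Iio]
  congr 1
  ext t
  simp

theorem gaussianReal_real_Ioi_self (μ : ℝ) (hv : v ≠ 0) :
    (gaussianReal μ v).real (Ioi μ) = 1 / 2 := by
  have : NullSingletonClass (gaussianReal 0 v) := nullSingletonClass_gaussianReal hv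
  have h_symm := congrArg ENNReal.toReal (gaussianReal_zero_Iio_neg (v := v) 0)
  rw [neg_zero, ← measureReal_def, ← measureReal_def] at h_symm
  have h_compl := probReal_compl_eq_one_sub (μ := gaussianReal 0 v) (measurableSet_Ici (a := 0))
  rw [compl_Ici, measureReal_congr Ioi_ae_eq_Ici.symm] at h_compl
  have h_shift : (· + μ) ⁻¹' Ioi (0 + μ) = Ioi 0 := by
    ext
    simp
  rw [← zero_add μ, ← gaussianReal_map_add_const,
    map_measureReal_apply (by fun_prop) measurableSet_Ioi, h_shift]
  linarith

theorem gaussianReal_real_Ioi_le (hv : v ≠ 0) {s : ℝ} (hs : 0 ≤ s) :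
    (gaussianReal 0 v).real (Ioi s) ≤ Real.exp (-s ^ 2 / (2 * v)) / 2 := by
  have h_eq_integral (m : ℝ) :
      (gaussianReal m v).real (Ioi s) = ∫ t in Ioi s, gaussianPDFReal m v t := by
    rw [measureReal_def, gaussianReal_apply_eq_integral _ hv, ENNReal.toReal_ofReal
      (setIntegral_nonneg measurableSet_Ioi fun t _ ↦ gaussianPDFReal_nonneg _ _ _)]
  calc (gaussianReal 0 v).real (Ioi s) = ∫ t in Ioi s, gaussianPDFReal 0 v t := h_eq_integral 0
    _ ≤ ∫ t in Ioi s, Real.exp (-s ^ 2 / (2 * v)) * gaussianPDFReal s v t :=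
      setIntegral_mono_on (integrable_gaussianPDFReal _ _).integrableOn
        ((integrable_gaussianPDFReal _ _).const_mul _).integrableOn measurableSet_Ioi
        fun t ht ↦ gaussianPDFReal_le_exp_mul_gaussianPDFReal hs (le_of_lt ht)
    _ = Real.exp (-s ^ 2 / (2 * v)) * (gaussianReal s v).real (Ioi s) := by
      rw [integral_const_mul, h_eq_integral]
    _ = Real.exp (-s ^ 2 / (2 * v)) / 2 := by
      rw [gaussianReal_real_Ioi_self s hv]
      ring

theorem gaussianReal_real_compl_Icc_le (hv : v ≠ 0) {s : ℝ} (hs : 0 ≤ s) :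
    (gaussianReal 0 v).real (Icc (-s) s)ᶜ ≤ Real.exp (-s ^ 2 / (2 * v)) := by
  have h_compl : (Icc (-s) s)ᶜ = Iio (-s) ∪ Ioi s := by
    ext t
    simp only [mem_compl_iff, mem_Icc, mem_union, mem_Iio, mem_Ioi, not_and_or, not_le]
  calc (gaussianReal 0 v).real (Icc (-s) s)ᶜ
      ≤ (gaussianReal 0 v).real (Iio (-s)) + (gaussianReal 0 v).real (Ioi s) := by
        rw [h_compl]
        exact measureReal_union_le _ _
    _ = 2 * (gaussianReal 0 v).real (Ioi s) := by
      rw [measureReal_def, gaussianReal_zero_Iio_neg, ← measureReal_def]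
      ring
    _ ≤ Real.exp (-s ^ 2 / (2 * v)) := by
      linarith [gaussianReal_real_Ioi_le hv hs]

end GaussianTail

theorem integral_cexp_I_mul_gaussianReal_zero (v : ℝ≥0) (x : ℝ) :
    ∫ t, Complex.exp (Complex.I * x * t) ∂gaussianReal 0 v
      = (Real.exp (-(v * x ^ 2 / 2)) : ℂ) := by
  have h_char := charFun_gaussianReal (μ := 0) (v := v) x
  rw [charFun_apply_real] at h_char
  convert h_char using 1
  · congr with t
    congr 1
    ring
  · push_cast
    ring_nf

theorem gaussianPDFReal_zero_of_coe_eq_two_mul_sq {v : ℝ≥0} {T : ℝ} (hT : 0 ≤ T)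
    (hv : (v : ℝ) = 2 * T ^ 2) (t : ℝ) :
    gaussianPDFReal 0 v t = 1 / (2 * T * Real.sqrt Real.pi) * Real.exp (-t ^ 2 / (4 * T ^ 2)) := by
  have h_sqrt : √(2 * Real.pi * (2 * T ^ 2)) = 2 * T * √Real.pi := by
    rw [show 2 * Real.pi * (2 * T ^ 2) = (2 * T) ^ 2 * Real.pi by ring,
      Real.sqrt_mul' _ Real.pi_pos.le, Real.sqrt_sq (by positivity)]
  simp only [gaussianPDFReal, hv, sub_zero, h_sqrt]
  ring_nf

/-- the Fourier transform of the truncated Gaussian sampling distribution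
`μ = (1−c)·δ₀ + a_T(t)·1_{[−σT,σT]}(t) dt` approximates the Gaussian filter `exp(−x²T²)`
within error `2(1−c) ≤ 2·exp(−σ²/4)`. -/
theorem stmt15 (T σ : ℝ) (hT : 0 < T) (hσ : 0 < σ) (x : ℝ) :
    let aT : ℝ → ℝ := fun t => 1 / (2 * T * Real.sqrt Real.pi) * Real.exp (-t ^ 2 / (4 * T ^ 2))
    let c : ℝ := ∫ t in Set.Icc (-(σ * T)) (σ * T), aT t
    let μ : Measure ℝ :=
      ENNReal.ofReal (1 - c) • Measure.dirac 0 +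
        (volume.restrict (Set.Icc (-(σ * T)) (σ * T))).withDensity fun t => ENNReal.ofReal (aT t)
    ‖(∫ t : ℝ, Complex.exp (Complex.I * x * t) ∂μ) - (Real.exp (-(x ^ 2 * T ^ 2)) : ℂ)‖
        ≤ 2 * (1 - c) ∧
      2 * (1 - c) ≤ 2 * Real.exp (-σ ^ 2 / 4) := by
  intro aT c μ
  set v : ℝ≥0 := ⟨2 * T ^ 2, by positivity⟩
  have hv_coe : (v : ℝ) = 2 * T ^ 2 := rfl
  have hv : v ≠ 0 := by
    rw [← NNReal.coe_ne_zero, hv_coe]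
    positivity
  have haT : aT = gaussianPDFReal 0 v :=
    funext fun t ↦ (gaussianPDFReal_zero_of_coe_eq_two_mul_sq hT.le hv_coe t).symm
  have hc : 1 - c = (gaussianReal 0 v).real (Icc (-(σ * T)) (σ * T))ᶜ := by
    rw [probReal_compl_eq_one_sub measurableSet_Icc, measureReal_def,
      gaussianReal_apply_eq_integral _ hv, ENNReal.toReal_ofReal
        (setIntegral_nonneg measurableSet_Icc fun t _ ↦ gaussianPDFReal_nonneg _ _ _), ← haT]
  have hμ : μ = (gaussianReal 0 v).truncate (Icc (-(σ * T)) (σ * T)) 0 := by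
    rw [Measure.truncate, ← ofReal_measureReal, ← hc, gaussianReal_of_var_ne_zero _ hv,
      restrict_withDensity measurableSet_Icc, gaussianPDF_def, ← haT]
  refine ⟨?_, ?_⟩
  · rw [hμ, hc, show -(x ^ 2 * T ^ 2) = -(v * x ^ 2 / 2) by rw [hv_coe]; ring,
      ← integral_cexp_I_mul_gaussianReal_zero]
    refine Measure.norm_integral_truncate_sub_integral_le _ measurableSet_Icc 0 (by fun_prop)
      fun t ↦ ?_
    rw [mul_assoc, ← Complex.ofReal_mul, Complex.norm_exp_I_mul_ofReal]
  · have h_exponent : -(σ * T) ^ 2 / (2 * (v : ℝ)) = -σ ^ 2 / 4 := by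
      rw [hv_coe]
      field_simp
      ring
    rw [hc, ← h_exponent]
    linarith [gaussianReal_real_compl_Icc_le hv (s := σ * T) (by positivity)]
end

section
/- Let L, M, R be positive integers, Φ ∈ ℂ^{L×M} with every row of Euclidean norm at most 1, Ψ ∈ ℂ^{R×M} with every row of Euclidean norm at most 1, λ_1,…,λ_M ∈ ℝ, T ≥ 0, Δ > 0, θ ∈ ℝ, and S ⊆ [M] a subset such that |θ − λ_m| ≥ Δ/2 for every m ∈ S. Then ‖ Σ_{m∈S} exp(−(θ−λ_m)²T²)·Φ_{:,m}·(Ψ_{:,m})ᴴ ‖_F ≤ √(|S|·L·R) · exp(−Δ²T²/4). -/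
open Matrix

/-- Gaussian suppression of contributions from eigenvalues at distance at
least `Δ/2` from the probed energy `θ`, for overlap matrices with rows of norm at most 1. -/
theorem stmt17 (L M R : ℕ) (hL : 0 < L) (hM : 0 < M) (hR : 0 < R)
    (Φ : Matrix (Fin L) (Fin M) ℂ) (Ψ : Matrix (Fin R) (Fin M) ℂ)
    (hΦrows : ∀ l, ∑ m, ‖Φ l m‖ ^ 2 ≤ 1) (hΨrows : ∀ r, ∑ m, ‖Ψ r m‖ ^ 2 ≤ 1)
    (lam : Fin M → ℝ) (T Δ θ : ℝ) (hT : 0 ≤ T) (hΔ : 0 < Δ)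
    (S : Finset (Fin M)) (hfar : ∀ m ∈ S, Δ / 2 ≤ |θ - lam m|) :
    frob (∑ m ∈ S, (Real.exp (-(θ - lam m) ^ 2 * T ^ 2) : ℂ) •
        Matrix.of fun l r => Φ l m * (starRingEnd ℂ) (Ψ r m)) ≤
      Real.sqrt (S.card * L * R) * Real.exp (-Δ ^ 2 * T ^ 2 / 4) := by
  set E := Real.exp (-Δ ^ 2 * T ^ 2 / 4) with hEdef
  have hE0 : 0 < E := Real.exp_pos _
  set A := (∑ m ∈ S, (Real.exp (-(θ - lam m) ^ 2 * T ^ 2) : ℂ) •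
        Matrix.of fun l r => Φ l m * (starRingEnd ℂ) (Ψ r m)) with hA
  -- entrywise bound
  have hentry : ∀ l r, ‖A l r‖ ≤ E := by
    intro l r
    have hAlr : A l r = ∑ m ∈ S, (Real.exp (-(θ - lam m) ^ 2 * T ^ 2) : ℂ) *
        (Φ l m * (starRingEnd ℂ) (Ψ r m)) := by
      simp [hA, Matrix.sum_apply, Matrix.smul_apply, smul_eq_mul]
    rw [hAlr]
    calc ‖∑ m ∈ S, (Real.exp (-(θ - lam m) ^ 2 * T ^ 2) : ℂ) *
        (Φ l m * (starRingEnd ℂ) (Ψ r m))‖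
        ≤ ∑ m ∈ S, ‖(Real.exp (-(θ - lam m) ^ 2 * T ^ 2) : ℂ) *
          (Φ l m * (starRingEnd ℂ) (Ψ r m))‖ := norm_sum_le _ _
      _ = ∑ m ∈ S, Real.exp (-(θ - lam m) ^ 2 * T ^ 2) * (‖Φ l m‖ * ‖Ψ r m‖) := by
          apply Finset.sum_congr rfl
          intro m hm
          simp only [norm_mul, Complex.norm_real, RCLike.norm_conj, Real.norm_eq_abs,
            abs_of_pos (Real.exp_pos _)]
      _ ≤ ∑ m ∈ S, E * (‖Φ l m‖ * ‖Ψ r m‖) := by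
          apply Finset.sum_le_sum
          intro m hm
          have h1 : Δ / 2 ≤ |θ - lam m| := hfar m hm
          have h2 : (Δ / 2) ^ 2 ≤ (θ - lam m) ^ 2 := by
            have := sq_abs (θ - lam m)
            nlinarith [abs_nonneg (θ - lam m), hΔ.le]
          have h3 : -(θ - lam m) ^ 2 * T ^ 2 ≤ -Δ ^ 2 * T ^ 2 / 4 := by
            nlinarith [sq_nonneg T]
          exact mul_le_mul_of_nonneg_right (Real.exp_le_exp.mpr h3)
            (mul_nonneg (norm_nonneg _) (norm_nonneg _))
      _ = E * ∑ m ∈ S, ‖Φ l m‖ * ‖Ψ r m‖ := (Finset.mul_sum _ _ _).symm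
      _ ≤ E * 1 := by
          apply mul_le_mul_of_nonneg_left _ hE0.le
          have hCS := Finset.sum_mul_sq_le_sq_mul_sq S (fun m => ‖Φ l m‖) (fun m => ‖Ψ r m‖)
          have hΦS : ∑ m ∈ S, ‖Φ l m‖ ^ 2 ≤ 1 :=
            le_trans (Finset.sum_le_sum_of_subset_of_nonneg (Finset.subset_univ S)
              (fun i _ _ => by positivity)) (hΦrows l)
          have hΨS : ∑ m ∈ S, ‖Ψ r m‖ ^ 2 ≤ 1 :=
            le_trans (Finset.sum_le_sum_of_subset_of_nonneg (Finset.subset_univ S)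
              (fun i _ _ => by positivity)) (hΨrows r)
          have hnn : 0 ≤ ∑ m ∈ S, ‖Φ l m‖ * ‖Ψ r m‖ :=
            Finset.sum_nonneg fun m _ => mul_nonneg (norm_nonneg _) (norm_nonneg _)
          have hΦnn : 0 ≤ ∑ m ∈ S, ‖Φ l m‖ ^ 2 :=
            Finset.sum_nonneg fun m _ => by positivity
          nlinarith
      _ = E := mul_one E
  -- Frobenius bound
  rcases S.eq_empty_or_nonempty with hS | hS
  · subst hS
    simp only [Finset.sum_empty] at hA
    have : frob A = 0 := by
      simp [frob, hA]
    rw [this]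
    positivity
  · have hcard : (1 : ℝ) ≤ S.card := by exact_mod_cast hS.card_pos
    have h1 : frob A ≤ Real.sqrt ((L : ℝ) * R) * E := by
      rw [frob]
      have hsum : ∑ l, ∑ r, ‖A l r‖ ^ 2 ≤ (L : ℝ) * R * E ^ 2 := by
        calc ∑ l, ∑ r, ‖A l r‖ ^ 2 ≤ ∑ l : Fin L, ∑ r : Fin R, E ^ 2 := by
              apply Finset.sum_le_sum; intro l _
              apply Finset.sum_le_sum; intro r _
              exact pow_le_pow_left₀ (norm_nonneg _) (hentry l r) 2
          _ = (L : ℝ) * R * E ^ 2 := by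
              simp [Finset.sum_const, mul_assoc]
      calc Real.sqrt (∑ l, ∑ r, ‖A l r‖ ^ 2) ≤ Real.sqrt ((L : ℝ) * R * E ^ 2) :=
            Real.sqrt_le_sqrt hsum
        _ = Real.sqrt ((L : ℝ) * R) * E := by
            rw [Real.sqrt_mul (by positivity), Real.sqrt_sq hE0.le]
    calc frob A ≤ Real.sqrt ((L : ℝ) * R) * E := h1
      _ ≤ Real.sqrt ((S.card : ℝ) * L * R) * E := by
          apply mul_le_mul_of_nonneg_right _ hE0.le
          apply Real.sqrt_le_sqrt
          nlinarith [mul_nonneg (sub_nonneg.mpr hcard)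
            (mul_nonneg (Nat.cast_nonneg L : (0:ℝ) ≤ L) (Nat.cast_nonneg R : (0:ℝ) ≤ R))]
end
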